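/- arXiv:2112.14587 — 5 statements merged into one kernel-verified Lean document; each statement's English description precedes it below -/
import Mathlib

section
/- Let R = K[X_1,…,X_d] be a polynomial ring over a field K, I a monomial ideal, and m = X_1^{c_1}⋯X_d^{c_d} a monomial. Let F = { i : c_i ≠ 0 } and let π_F : R → R be the K-algebra map sending X_i to 1 for i ∈ F and fixing X_i for i ∉ F. Then I :_R (m)^∞ = π_F(I)·R. -/
/-- An ideal of `K[X_1,…,X_d]` is a *monomial ideal* if it is generated by monomials. -/
def IsMonomialIdeal {K : Type*} [Field K] {d : ℕ} (I : Ideal (MvPolynomial (Fin d) K)) : Prop :=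
  ∃ S : Set (Fin d →₀ ℕ), I = Ideal.span ((fun s => MvPolynomial.monomial s (1 : K)) '' S)

/-!
Saturating by `X^c` makes the variables in the support `F` of `c` invertible: `X^s` divides
`X^a · X^{n c}` for some `n` exactly when `X^{s|_{F^c}}` divides `X^a`. Hence the saturation of
`(X^s : s ∈ S)` is generated by the monomials `X^{s|_{F^c}} = π_F(X^s)`.
-/

namespace Finsupp

theorem exists_le_add_nsmul_iff_filter_le {σ : Type*} (s a c : σ →₀ ℕ) :
    (∃ n : ℕ, s ≤ a + n • c) ↔ s.filter (fun i => c i = 0) ≤ a := by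
  constructor
  · rintro ⟨n, hn⟩ i
    by_cases hi : c i = 0
    · simpa [filter_apply, hi] using hn i
    · simp [hi]
  · intro h
    refine ⟨s.degree, fun i => ?_⟩
    by_cases hi : c i = 0
    · simpa [filter_apply, hi] using h i
    · calc s i ≤ s.degree := le_degree i s
        _ ≤ s.degree * c i := Nat.le_mul_of_pos_right _ (Nat.pos_of_ne_zero hi)
        _ ≤ (a + s.degree • c) i := by simp

end Finsupp

namespace MvPolynomial

variable {σ R : Type*} [CommSemiring R]

theorem aeval_ite_one_X_monomial_one (c s : σ →₀ ℕ) :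
    aeval (fun i => if c i ≠ 0 then (1 : MvPolynomial σ R) else X i) (monomial s (1 : R)) =
      monomial (s.filter fun i => c i = 0) 1 := by
  classical
  rw [aeval_monomial, map_one, one_mul, monomial_eq, C_1, one_mul, Finsupp.prod,
    Finsupp.prod, Finsupp.support_filter, Finset.prod_filter]
  refine Finset.prod_congr rfl fun i _ => ?_
  by_cases hi : c i = 0 <;> simp [hi]

theorem map_aeval_ite_one_X_span_monomial_image (c : σ →₀ ℕ) (S : Set (σ →₀ ℕ)) :
    Ideal.map (aeval fun i => if c i ≠ 0 then (1 : MvPolynomial σ R) else X i)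
        (Ideal.span ((fun s => monomial s (1 : R)) '' S)) =
      Ideal.span ((fun s => monomial s (1 : R)) '' ((fun s => s.filter fun i => c i = 0) '' S)) := by
  rw [Ideal.map_span, Set.image_image, Set.image_image]
  exact congrArg Ideal.span (Set.image_congr fun s _ => aeval_ite_one_X_monomial_one c s)

theorem mem_colon_span_monomial_one_pow {I : Ideal (MvPolynomial σ R)} {f : MvPolynomial σ R}
    {c : σ →₀ ℕ} {n : ℕ} :
    f ∈ I.colon ((Ideal.span {monomial c (1 : R)} ^ n : Ideal (MvPolynomial σ R)) :
        Set (MvPolynomial σ R)) ↔ f * monomial (n • c) 1 ∈ I := by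
  rw [Ideal.span_singleton_pow, Submodule.mem_colon_span_singleton, monomial_pow, one_pow,
    smul_eq_mul]

theorem iSup_colon_span_monomial_pow_eq_span_monomial_filter (c : σ →₀ ℕ)
    (S : Set (σ →₀ ℕ)) :
    ⨆ n : ℕ, (Ideal.span ((fun s => monomial s (1 : R)) '' S)).colon
        ((Ideal.span {monomial c (1 : R)} ^ n : Ideal (MvPolynomial σ R)) :
          Set (MvPolynomial σ R)) =
      Ideal.span ((fun s => monomial s (1 : R)) '' ((fun s => s.filter fun i => c i = 0) '' S)) := by
  apply le_antisymm
  · refine iSup_le fun n f hf => ?_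
    rw [mem_colon_span_monomial_one_pow, mem_ideal_span_monomial_image] at hf
    refine mem_ideal_span_monomial_image.2 fun a ha => ?_
    have hmul : a + n • c ∈ (f * monomial (n • c) 1).support := by
      rwa [mem_support_iff, coeff_mul_monomial, mul_one, ← mem_support_iff]
    obtain ⟨s, hs, hle⟩ := hf _ hmul
    exact ⟨_, ⟨s, hs, rfl⟩, (Finsupp.exists_le_add_nsmul_iff_filter_le s a c).1 ⟨n, hle⟩⟩
  · rw [Ideal.span_le]
    rintro _ ⟨_, ⟨s, hs, rfl⟩, rfl⟩
    obtain ⟨n, hn⟩ := (Finsupp.exists_le_add_nsmul_iff_filter_le s _ c).2 le_rfl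
    refine Ideal.mem_iSup_of_mem n ?_
    rw [mem_colon_span_monomial_one_pow, monomial_mul, one_mul, mem_ideal_span_monomial_image]
    intro a ha
    rw [Finset.mem_singleton.1 (support_monomial_subset ha)]
    exact ⟨s, hs, hn⟩

end MvPolynomial

/-- For a monomial ideal `I` and a monomial `m = X^c`, letting
`π_F` substitute `1` for `X_i` whenever `c_i ≠ 0`, one has `I : (m)^∞ = π_F(I)·R`. -/
theorem saturation_monomial_eq_map_proj {K : Type*} [Field K] {d : ℕ}
    (I : Ideal (MvPolynomial (Fin d) K)) (hI : IsMonomialIdeal I) (c : Fin d →₀ ℕ) :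
    (⨆ n : ℕ, I.colon (((Ideal.span {MvPolynomial.monomial c (1 : K)}) ^ n : Ideal (MvPolynomial (Fin d) K)) : Set (MvPolynomial (Fin d) K))) =
      Ideal.map (MvPolynomial.aeval
        (fun i => if c i ≠ 0 then (1 : MvPolynomial (Fin d) K) else MvPolynomial.X i)) I := by
  obtain ⟨S, rfl⟩ := hI
  rw [MvPolynomial.map_aeval_ite_one_X_span_monomial_image,
    MvPolynomial.iSup_colon_span_monomial_pow_eq_span_monomial_filter]
end

section
/- Let R = K[X_1,…,X_d] be a polynomial ring over a field K, I a monomial ideal, f ∈ R a nonzero polynomial, and let 𝒥_f = ⋂_{n≥1} √(J_{f^n}) be the squarefree monomial ideal associated to f (where J_g is the ideal generated by the monomials of g). Then I :_R (f)^∞ = I :_R 𝒥_f^∞. -/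
/-- For a polynomial `f`, `monIdealOf f` is the (monomial) ideal generated by the monomials
occurring in `f` with nonzero coefficient. -/
noncomputable def monIdealOf {K : Type*} [Field K] {d : ℕ} (f : MvPolynomial (Fin d) K) :
    Ideal (MvPolynomial (Fin d) K) :=
  Ideal.span ((fun s => MvPolynomial.monomial s (1 : K)) '' (f.support : Set (Fin d →₀ ℕ)))

/-!
A monomial ideal with finitely many generators `x^s`, `s ∈ S`, is the intersection, over all
ways `c` of picking a variable `c s` in the support of each generator, of the ideals
`Q_c = (X_{c s} ^ s_{c s} : s ∈ S)`. Saturation commutes with finite intersections, and `Q_c` is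
primary to the monomial prime `P = (X_i : i ∈ range c)`, so `Q_c : J^∞` is `⊤` when `J ⊆ P` and
`Q_c` otherwise. It remains to see that `(f)` and `𝒥_f` lie in the same monomial primes:
`f ∈ 𝒥_f`, and `J_f ⊆ P` as soon as `f ∈ P`.
-/

namespace Ideal

variable {R : Type*} [CommSemiring R] {I J : Ideal R}

/-- The saturation `I : J^∞`. -/
def saturation (I J : Ideal R) : Ideal R :=
  ⨆ n : ℕ, I.colon ((J ^ n : Ideal R) : Set R)

theorem monotone_colon_pow (I J : Ideal R) :
    Monotone fun n : ℕ => I.colon ((J ^ n : Ideal R) : Set R) :=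
  fun _ _ hmn => Submodule.colon_mono le_rfl (Ideal.pow_le_pow_right hmn)

theorem mem_saturation {x : R} :
    x ∈ I.saturation J ↔ ∃ n : ℕ, x ∈ I.colon ((J ^ n : Ideal R) : Set R) :=
  Submodule.mem_iSup_of_directed _ (monotone_colon_pow I J).directed_le

theorem saturation_eq_top_of_pow_le {n : ℕ} (h : J ^ n ≤ I) : I.saturation J = ⊤ :=
  top_unique <| le_iSup_of_le n ((Submodule.colon_eq_top_iff_subset _).2 h).ge

theorem saturation_iInf {ι : Type*} [Finite ι] (I : ι → Ideal R) (J : Ideal R) :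
    (⨅ i, I i).saturation J = ⨅ i, (I i).saturation J := by
  refine le_antisymm
    (le_iInf fun i => iSup_mono fun n => Submodule.colon_mono (iInf_le I i) le_rfl) fun x hx => ?_
  choose n hn using fun i => mem_saturation.1 ((Submodule.mem_iInf _).1 hx i)
  obtain ⟨N, hN⟩ := Finite.bddAbove_range n
  refine mem_saturation.2 ⟨N, ?_⟩
  rw [Submodule.iInf_colon]
  exact (Submodule.mem_iInf _).2 fun i => monotone_colon_pow _ _ (hN ⟨i, rfl⟩) (hn i)

end Ideal

theorem Finsupp.exists_le_iff_forall_exists_apply_le {σ : Type*} (S : Set (σ →₀ ℕ)) (m : σ →₀ ℕ) :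
    (∃ s ∈ S, s ≤ m) ↔
      ∀ c : (s : S) → (s : σ →₀ ℕ).support, ∃ s : S, (s : σ →₀ ℕ) (c s) ≤ m (c s) := by
  refine ⟨fun ⟨s, hs, hsm⟩ c => ⟨⟨s, hs⟩, hsm _⟩, fun h => ?_⟩
  by_contra! hS
  have hwit : ∀ s : S, ∃ i : (s : σ →₀ ℕ).support, m i < (s : σ →₀ ℕ) i := fun s => by
    obtain ⟨i, hi⟩ : ∃ i, m i < (s : σ →₀ ℕ) i := by
      simpa [Finsupp.le_def] using hS s s.2
    exact ⟨⟨i, Finsupp.mem_support_iff.2 (by omega)⟩, hi⟩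
  choose c hc using hwit
  obtain ⟨s, hs⟩ := h c
  exact (hc s).not_ge hs

namespace MvPolynomial

variable {σ R : Type*}

section CommSemiring

variable [CommSemiring R]

variable (R) in
noncomputable def monomialIdeal (S : Set (σ →₀ ℕ)) : Ideal (MvPolynomial σ R) :=
  Ideal.span ((fun s => monomial s (1 : R)) '' S)

variable {S : Set (σ →₀ ℕ)} {p : MvPolynomial σ R}

theorem mem_monomialIdeal : p ∈ monomialIdeal R S ↔ ∀ m ∈ p.support, ∃ s ∈ S, s ≤ m :=
  mem_ideal_span_monomial_image

theorem monomial_mem_monomialIdeal {s : σ →₀ ℕ} (hs : s ∈ S) :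
    monomial s (1 : R) ∈ monomialIdeal R S :=
  Ideal.subset_span ⟨s, hs, rfl⟩

theorem span_X_image_eq_monomialIdeal (A : Set σ) :
    Ideal.span (X '' A : Set (MvPolynomial σ R)) =
      monomialIdeal R ((fun i => Finsupp.single i 1) '' A) := by
  rw [monomialIdeal, Set.image_image]
  rfl

theorem monomialIdeal_support_le_iff :
    monomialIdeal R p.support ≤ monomialIdeal R S ↔ p ∈ monomialIdeal R S := by
  refine ⟨fun h => h (mem_monomialIdeal.2 fun m hm => ⟨m, hm, le_rfl⟩), fun hp => ?_⟩
  rw [monomialIdeal, Ideal.span_le]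
  rintro _ ⟨m, hm, rfl⟩
  obtain ⟨s, hs, hsm⟩ := mem_monomialIdeal.1 hp m hm
  refine mem_monomialIdeal.2 fun m' hm' => ⟨s, hs, ?_⟩
  rwa [Finset.mem_singleton.1 (support_monomial_subset hm')]

theorem monomialIdeal_eq_iInf (S : Set (σ →₀ ℕ)) :
    monomialIdeal R S = ⨅ c : (s : S) → (s : σ →₀ ℕ).support,
      monomialIdeal R (Set.range fun s => Finsupp.single (c s : σ) ((s : σ →₀ ℕ) (c s))) := by
  ext p
  simp only [Submodule.mem_iInf, mem_monomialIdeal, Set.exists_range_iff, Finsupp.single_le_iff,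
    Finsupp.exists_le_iff_forall_exists_apply_le S]
  exact ⟨fun h c m hm => h m hm c, fun h m hm c => h c m hm⟩

theorem exists_pow_span_X_range_le {ι : Type*} [Finite ι] (e : ι → σ) (k : ι → ℕ) :
    ∃ M : ℕ, Ideal.span (X '' Set.range e) ^ M ≤
      monomialIdeal R (Set.range fun j => Finsupp.single (e j) (k j)) := by
  refine Ideal.exists_pow_le_of_le_radical_of_fg ?_
    (Submodule.fg_span ((Set.finite_range e).image X))
  rw [Ideal.span_le]
  rintro _ ⟨_, ⟨j, rfl⟩, rfl⟩
  exact ⟨k j, by rw [X_pow_eq_monomial]; exact monomial_mem_monomialIdeal ⟨j, rfl⟩⟩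

theorem exists_eq_add_support_subset_compl (p : MvPolynomial σ R) (U : Set (σ →₀ ℕ)) :
    ∃ p₁ p₀ : MvPolynomial σ R, p = p₁ + p₀ ∧ (∀ m ∈ p₁.support, m ∈ U) ∧
      ∀ m ∈ p₀.support, m ∉ U := by
  classical
  have hsupp (P : (σ →₀ ℕ) → Prop) [DecidablePred P] :
      ∀ m ∈ (∑ v ∈ p.support with P v, monomial v (coeff v p)).support, P m := by
    intro m hm
    obtain ⟨v, hv, hmv⟩ := Finset.mem_biUnion.1 (support_sum hm)
    rw [Finset.mem_singleton.1 (support_monomial_subset hmv)]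
    exact (Finset.mem_filter.1 hv).2
  exact ⟨_, _, (as_sum p).trans (Finset.sum_filter_add_sum_filter_not _ _ _).symm,
    hsupp (· ∈ U), hsupp (· ∉ U)⟩

end CommSemiring

theorem exists_finset_monomialIdeal_eq [CommRing R] [Finite σ] [IsNoetherianRing R]
    (S : Set (σ →₀ ℕ)) :
    ∃ S' : Finset (σ →₀ ℕ), monomialIdeal R S = monomialIdeal R S' := by
  classical
  obtain ⟨T, hTS, hT⟩ := (Submodule.fg_span_iff_fg_span_finset_subset _).1
    (IsNoetherian.noetherian (monomialIdeal R S))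
  obtain ⟨S', -, rfl⟩ := Finset.subset_set_image_iff.1 hTS
  exact ⟨S', hT.trans (by rw [Finset.coe_image]; rfl)⟩

section Domain

variable [CommRing R] [IsDomain R] {A : Set σ} {S : Set (σ →₀ ℕ)} {M : ℕ}

theorem eq_zero_of_mul_mem_monomialIdeal (hS : ∀ s ∈ S, ↑s.support ⊆ A)
    {p q : MvPolynomial σ R} (hp : p ∈ supported R Aᶜ) (hp₀ : p ≠ 0)
    (hq : ∀ m ∈ q.support, ¬∃ s ∈ S, s ≤ m) (hqp : q * p ∈ monomialIdeal R S) :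
    q = 0 := by
  classical
  by_contra hq₀
  obtain ⟨m, hm⟩ := support_nonempty.2 (mul_ne_zero hq₀ hp₀)
  obtain ⟨b, hb, a, ha, rfl⟩ := Finset.mem_add.1 (support_mul _ _ hm)
  -- A generator `s` below `b + a` involves only variables in `A`, on which `a` vanishes.
  obtain ⟨s, hs, hsle⟩ := mem_monomialIdeal.1 hqp _ hm
  refine hq b hb ⟨s, hs, fun i => ?_⟩
  by_cases hiA : i ∈ A
  · have hai : a i = 0 := by
      by_contra hai
      exact mem_supported.1 hp
        ((mem_vars_iff_mem_support i).2 ⟨a, ha, Finsupp.mem_support_iff.2 hai⟩) hiA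
    simpa [hai] using hsle i
  · simp [Finsupp.notMem_support_iff.1 fun hi => hiA (hS s hs hi)]

theorem mem_monomialIdeal_of_mul_mem (hS : ∀ s ∈ S, ↑s.support ⊆ A)
    (hM : Ideal.span (X '' A) ^ M ≤ monomialIdeal R S) {g h : MvPolynomial σ R}
    (hgh : g * h ∈ monomialIdeal R S) (hh : h ∉ Ideal.span (X '' A)) : g ∈ monomialIdeal R S := by
  obtain ⟨h₁, h₀, rfl, hh₁, hh₀⟩ := exists_eq_add_support_subset_compl h {m | ∃ i ∈ A, m i ≠ 0}
  obtain ⟨g₁, g₀, rfl, hg₁, hg₀⟩ := exists_eq_add_support_subset_compl g {m | ∃ s ∈ S, s ≤ m}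
  have h₁P : h₁ ∈ Ideal.span (X '' A) := mem_ideal_span_X_image.2 hh₁
  have g₁Q : g₁ ∈ monomialIdeal R S := mem_monomialIdeal.2 hg₁
  have h₀ne : h₀ ≠ 0 := by
    rintro rfl
    exact hh (by rwa [add_zero])
  have h₀free : h₀ ∈ supported R Aᶜ := mem_supported.2 fun i hi hiA => by
    obtain ⟨m, hm, him⟩ := (mem_vars_iff_mem_support i).1 hi
    exact hh₀ m hm ⟨i, hiA, Finsupp.mem_support_iff.1 him⟩
  -- `h₀ ≡ -h₁` modulo `h`, and `h₁ ^ M ∈ P ^ M ⊆ Q`.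
  have hmem : g₀ * h₀ ^ M ∈ monomialIdeal R S := by
    obtain ⟨q, hq⟩ := sub_dvd_pow_sub_pow h₀ (-h₁) M
    have : g₀ * h₀ ^ M = ((g₁ + g₀) * (h₁ + h₀) - g₁ * (h₁ + h₀)) * q + g₀ * (-h₁) ^ M := by
      linear_combination g₀ * hq
    rw [this]
    exact add_mem (Ideal.mul_mem_right _ _ (sub_mem hgh (Ideal.mul_mem_right _ _ g₁Q)))
      (Ideal.mul_mem_left _ _ (hM (Ideal.pow_mem_pow (neg_mem h₁P) M)))
  rwa [eq_zero_of_mul_mem_monomialIdeal hS (pow_mem h₀free M) (pow_ne_zero M h₀ne) hg₀ hmem,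
    add_zero]

theorem isPrime_span_X_image (A : Set σ) :
    (Ideal.span (X '' A : Set (MvPolynomial σ R))).IsPrime := by
  refine ⟨(Ideal.ne_top_iff_one _).2 fun h => ?_,
    fun {g h} hgh => or_iff_not_imp_right.2 fun hh => ?_⟩
  · obtain ⟨i, -, hi⟩ := mem_ideal_span_X_image.1 h 0 (by simp)
    exact hi rfl
  · rw [span_X_image_eq_monomialIdeal] at hgh ⊢
    refine mem_monomialIdeal_of_mul_mem (A := A) (M := 1) ?_ ?_ hgh hh
    · rintro _ ⟨i, hi, rfl⟩
      exact (Finset.coe_subset.2 Finsupp.support_single_subset).trans (by simpa using hi)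
    · rw [pow_one, span_X_image_eq_monomialIdeal]

theorem saturation_monomialIdeal_eq_self (hS : ∀ s ∈ S, ↑s.support ⊆ A)
    (hM : Ideal.span (X '' A) ^ M ≤ monomialIdeal R S) {J : Ideal (MvPolynomial σ R)}
    (hJ : ¬ J ≤ Ideal.span (X '' A)) : (monomialIdeal R S).saturation J = monomialIdeal R S := by
  refine le_antisymm (fun g hg => ?_) (le_iSup_of_le 0 Ideal.le_colon)
  obtain ⟨n, hn⟩ := Ideal.mem_saturation.1 hg
  obtain ⟨y, hyJ, hyP⟩ := SetLike.not_le_iff_exists.1 hJ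
  exact mem_monomialIdeal_of_mul_mem hS hM
    (Submodule.mem_colon.1 hn _ (Ideal.pow_mem_pow hyJ n))
    fun h => hyP ((isPrime_span_X_image A).mem_of_pow_mem n h)

theorem saturation_monomialIdeal_congr (hS : ∀ s ∈ S, ↑s.support ⊆ A)
    (hM : Ideal.span (X '' A) ^ M ≤ monomialIdeal R S) {J J' : Ideal (MvPolynomial σ R)}
    (hJJ' : J ≤ Ideal.span (X '' A) ↔ J' ≤ Ideal.span (X '' A)) :
    (monomialIdeal R S).saturation J = (monomialIdeal R S).saturation J' := by
  by_cases hJ : J ≤ Ideal.span (X '' A)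
  · rw [Ideal.saturation_eq_top_of_pow_le ((Ideal.pow_right_mono hJ M).trans hM),
      Ideal.saturation_eq_top_of_pow_le ((Ideal.pow_right_mono (hJJ'.1 hJ) M).trans hM)]
  · rw [saturation_monomialIdeal_eq_self hS hM hJ,
      saturation_monomialIdeal_eq_self hS hM (hJJ'.not.1 hJ)]

end Domain

end MvPolynomial

open MvPolynomial

theorem iInf_radical_monIdealOf_pow_le_iff {K : Type*} [Field K] {d : ℕ}
    (f : MvPolynomial (Fin d) K) (A : Set (Fin d)) :
    (⨅ k : ℕ, (monIdealOf (f ^ (k + 1))).radical) ≤ Ideal.span (X '' A) ↔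
      f ∈ Ideal.span (X '' A) := by
  refine ⟨fun h => h ((Submodule.mem_iInf _).2 fun k => ⟨k + 1, ?_⟩), fun hf => ?_⟩
  · exact monomialIdeal_support_le_iff.1 le_rfl
  · refine (iInf_le _ 0).trans ?_
    rw [zero_add, pow_one, ← (isPrime_span_X_image A).radical]
    refine Ideal.radical_mono ?_
    rw [span_X_image_eq_monomialIdeal] at hf ⊢
    exact monomialIdeal_support_le_iff.2 hf

theorem saturation_principal_eq_saturation_assoc_general {K : Type*} [Field K] {d : ℕ}
    (I : Ideal (MvPolynomial (Fin d) K)) (hI : IsMonomialIdeal I)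
    (f : MvPolynomial (Fin d) K) :
    (⨆ n : ℕ, I.colon (((Ideal.span {f}) ^ n : Ideal (MvPolynomial (Fin d) K)) : Set (MvPolynomial (Fin d) K))) =
      ⨆ n : ℕ, I.colon (((⨅ k : ℕ, (monIdealOf (f ^ (k + 1))).radical) ^ n :
        Ideal (MvPolynomial (Fin d) K)) : Set (MvPolynomial (Fin d) K)) := by
  obtain ⟨S₀, rfl⟩ := hI
  obtain ⟨S, hS⟩ := exists_finset_monomialIdeal_eq (R := K) S₀
  change (monomialIdeal K S₀).saturation (Ideal.span {f}) =
    (monomialIdeal K S₀).saturation (⨅ k : ℕ, (monIdealOf (f ^ (k + 1))).radical)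
  rw [hS, monomialIdeal_eq_iInf, Ideal.saturation_iInf, Ideal.saturation_iInf]
  refine iInf_congr fun c => ?_
  obtain ⟨M, hM⟩ := exists_pow_span_X_range_le (R := K) (fun s => (c s : Fin d))
    (fun s => (s : Fin d →₀ ℕ) (c s))
  refine saturation_monomialIdeal_congr ?_ hM ?_
  · rintro _ ⟨s, rfl⟩
    exact (Finset.coe_subset.2 Finsupp.support_single_subset).trans (by simp)
  · rw [Ideal.span_singleton_le_iff_mem, iInf_radical_monIdealOf_pow_le_iff]

/-- For a monomial ideal `I` and a nonzero polynomial `f`, with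
`𝒥_f = ⋂_{n ≥ 1} √(J_{f^n})` the associated squarefree monomial ideal,
`I : (f)^∞ = I : 𝒥_f^∞`. -/
theorem saturation_principal_eq_saturation_assoc {K : Type*} [Field K] {d : ℕ}
    (I : Ideal (MvPolynomial (Fin d) K)) (hI : IsMonomialIdeal I)
    (f : MvPolynomial (Fin d) K) (hf : f ≠ 0) :
    (⨆ n : ℕ, I.colon (((Ideal.span {f}) ^ n : Ideal (MvPolynomial (Fin d) K)) : Set (MvPolynomial (Fin d) K))) =
      ⨆ n : ℕ, I.colon (((⨅ k : ℕ, (monIdealOf (f ^ (k + 1))).radical) ^ n :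
        Ideal (MvPolynomial (Fin d) K)) : Set (MvPolynomial (Fin d) K)) :=
  saturation_principal_eq_saturation_assoc_general I hI f
end

section
/- Let R be a commutative Noetherian ring and I_1,…,I_r ideals of R such that each I_i = (a_i) is generated by a nonzerodivisor a_i. Then there exists α ∈ ℕ such that for every ideal J of R and every n = (n_1,…,n_r) ∈ ℕ^r, I_1^{n_1}⋯I_r^{n_r} :_R J^{α(n_1+⋯+n_r)} = I_1^{n_1}⋯I_r^{n_r} :_R J^{α(n_1+⋯+n_r)+1}. -/
/-!
By primary decomposition, every ideal `I` of a Noetherian ring has an index `β` with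
`I : J^k = I : J^(k+1)` for all ideals `J` and all `k ≥ β`: for a primary component `Q` with
`(√Q)^β ⊆ Q`, either `J ⊆ √Q`, so that `J^k ⊆ Q`, or `J` contains an element that is a
nonzerodivisor modulo `Q`. Multiplying such an `I` by a nonzerodivisor `a` raises the index by at
most the index of `(a)`, so `∏ (a_i)^(n_i)` is stable from `α (n_1 + ⋯ + n_r)` on, where `α` is
a common index of the ideals `(a_i)`.
-/

namespace Ideal

variable {R : Type*} [CommRing R]

theorem le_colon_iff_mul_le {I J K : Ideal R} : K ≤ I.colon (J : Set R) ↔ K * J ≤ I := by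
  rw [Ideal.mul_le]
  simp only [SetLike.le_def, Submodule.mem_colon, SetLike.mem_coe, smul_eq_mul]

theorem colon_pow_mono (I J : Ideal R) {k m : ℕ} (h : k ≤ m) :
    I.colon ((J ^ k : Ideal R) : Set R) ≤ I.colon ((J ^ m : Ideal R) : Set R) :=
  Submodule.colon_mono le_rfl (Ideal.pow_le_pow_right h)

theorem span_singleton_mul_right_mono_of_mem_nonZeroDivisors {a : R} (ha : a ∈ nonZeroDivisors R)
    {I J : Ideal R} : span {a} * I ≤ span {a} * J ↔ I ≤ J := by
  simp_rw [span_singleton_mul_le_span_singleton_mul, mul_cancel_left_mem_nonZeroDivisors ha,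
    exists_eq_right', SetLike.le_def]

theorem span_singleton_mul_colon_singleton {a : R} {I : Ideal R} (h : I ≤ span {a}) :
    span {a} * I.colon {a} = I := by
  refine le_antisymm (span_singleton_mul_le_iff.2 fun w hw => ?_)
    (le_span_singleton_mul_iff.2 fun t ht => ?_)
  · simpa [mul_comm] using Submodule.mem_colon_singleton.1 hw
  · obtain ⟨w, rfl⟩ := mem_span_singleton'.1 (h ht)
    exact ⟨w, Submodule.mem_colon_singleton.2 (by simpa using ht), mul_comm a w⟩

def ColonStableFrom (I : Ideal R) (β : ℕ) : Prop :=
  ∀ (J : Ideal R) (k : ℕ), β ≤ k →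
    I.colon ((J ^ k : Ideal R) : Set R) = I.colon ((J ^ (k + 1) : Ideal R) : Set R)

theorem colonStableFrom_iff {I : Ideal R} {β : ℕ} :
    I.ColonStableFrom β ↔
      ∀ (J Z : Ideal R) (k : ℕ), β ≤ k → Z * J ^ (k + 1) ≤ I → Z * J ^ k ≤ I := by
  refine ⟨fun h J Z k hk hZ => ?_, fun h J k hk => ?_⟩
  · rwa [← le_colon_iff_mul_le, h J k hk, le_colon_iff_mul_le]
  · exact le_antisymm (colon_pow_mono I J k.le_succ)
      (le_colon_iff_mul_le.2 (h J _ k hk (le_colon_iff_mul_le.1 le_rfl)))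

namespace ColonStableFrom

variable {I : Ideal R} {β : ℕ}

theorem mono (h : I.ColonStableFrom β) {β' : ℕ} (hβ : β ≤ β') : I.ColonStableFrom β' :=
  fun J k hk => h J k (hβ.trans hk)

theorem mul_pow_le (h : I.ColonStableFrom β) {J Z : Ideal R} {k : ℕ} (hk : β ≤ k)
    (hZ : Z * J ^ (k + 1) ≤ I) : Z * J ^ k ≤ I :=
  colonStableFrom_iff.1 h J Z k hk hZ

theorem mul_pow_le_of_le (h : I.ColonStableFrom β) {J Z : Ideal R} {k m : ℕ} (hk : β ≤ k)
    (hkm : k ≤ m) (hZ : Z * J ^ m ≤ I) : Z * J ^ k ≤ I := by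
  induction m, hkm using Nat.le_induction with
  | base => exact hZ
  | succ m hkm ih => exact ih (h.mul_pow_le (hk.trans hkm) hZ)

end ColonStableFrom

theorem colonStableFrom_top : (⊤ : Ideal R).ColonStableFrom 0 :=
  colonStableFrom_iff.2 fun _ _ _ _ _ => le_top

theorem colonStableFrom_finsetInf {ι : Type*} {s : Finset ι} {f : ι → Ideal R} {β : ℕ}
    (h : ∀ i ∈ s, (f i).ColonStableFrom β) : (s.inf f).ColonStableFrom β :=
  colonStableFrom_iff.2 fun _ _ _ hk hZ =>
    Finset.le_inf fun i hi => (h i hi).mul_pow_le hk (hZ.trans (Finset.inf_le hi))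

theorem IsPrimary.colonStableFrom {Q : Ideal R} (hQ : Q.IsPrimary) {β : ℕ}
    (hβ : Q.radical ^ β ≤ Q) : Q.ColonStableFrom β := by
  refine colonStableFrom_iff.2 fun J Z k hk hZ => ?_
  by_cases hJ : J ≤ Q.radical
  · calc Z * J ^ k ≤ J ^ k := mul_le_right
      _ ≤ Q.radical ^ k := pow_right_mono hJ k
      _ ≤ Q.radical ^ β := pow_le_pow_right hk
      _ ≤ Q := hβ
  obtain ⟨y, hyJ, hyQ⟩ := SetLike.not_le_iff_exists.1 hJ
  refine mul_le.2 fun z hz m hm => ((isPrimary_iff.1 hQ).2 ?_).resolve_right hyQ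
  rw [mul_assoc]
  exact hZ (mul_mem_mul hz (pow_succ J k ▸ mul_mem_mul hm hyJ))

theorem exists_colonStableFrom [IsNoetherianRing R] (I : Ideal R) : ∃ β, I.ColonStableFrom β := by
  obtain ⟨s, hs, hprimary⟩ := Submodule.isLasker R R I
  choose f hf using fun Q : Ideal R => Q.exists_radical_pow_le_of_fg Q.radical.fg_of_isNoetherianRing
  refine ⟨s.sup f, hs ▸ colonStableFrom_finsetInf fun Q hQ => ?_⟩
  exact (IsPrimary.colonStableFrom (hprimary hQ) (hf Q)).mono (Finset.le_sup hQ)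

/- If `Z J^(k+1) ⊆ aI`, then `Z J^γ ⊆ (a)`, so `Z J^γ = aW`; cancelling `a` gives
`W J^(k+1-γ) ⊆ I`, and the stability of `I` drops one power of `J`. -/
theorem ColonStableFrom.span_singleton_mul {a : R} (ha : a ∈ nonZeroDivisors R) {γ β : ℕ}
    (hγ : (span {a}).ColonStableFrom γ) {I : Ideal R} (hI : I.ColonStableFrom β) :
    (span {a} * I).ColonStableFrom (γ + β) := by
  refine colonStableFrom_iff.2 fun J Z k hk hZ => ?_
  obtain ⟨j, rfl⟩ := Nat.exists_eq_add_of_le (le_self_add.trans hk)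
  have hZa : Z * J ^ γ ≤ span {a} :=
    hγ.mul_pow_le_of_le le_rfl (by omega) (hZ.trans mul_le_left)
  set W := (Z * J ^ γ).colon {a}
  have hW : span {a} * W = Z * J ^ γ := span_singleton_mul_colon_singleton hZa
  have hWI : W * J ^ (j + 1) ≤ I := by
    rw [← span_singleton_mul_right_mono_of_mem_nonZeroDivisors ha, ← mul_assoc, hW, mul_assoc,
      ← pow_add, ← add_assoc]
    exact hZ
  calc Z * J ^ (γ + j) = span {a} * (W * J ^ j) := by rw [pow_add, ← mul_assoc, ← mul_assoc, hW]
    _ ≤ span {a} * I := mul_mono_right (hI.mul_pow_le (by omega) hWI)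

theorem ColonStableFrom.span_singleton_pow_mul {a : R} (ha : a ∈ nonZeroDivisors R) {γ β : ℕ}
    (hγ : (span {a}).ColonStableFrom γ) {I : Ideal R} (hI : I.ColonStableFrom β) (n : ℕ) :
    (span {a} ^ n * I).ColonStableFrom (γ * n + β) := by
  induction n with
  | zero => simpa using hI
  | succ n ih =>
    rw [pow_succ', mul_assoc, show γ * (n + 1) + β = γ + (γ * n + β) by ring]
    exact span_singleton_mul ha hγ ih

theorem colonStableFrom_prod_span_singleton_pow {ι : Type*} (s : Finset ι) {a : ι → R}
    (ha : ∀ i ∈ s, a i ∈ nonZeroDivisors R) {α : ℕ}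
    (hα : ∀ i ∈ s, (span {a i}).ColonStableFrom α) (n : ι → ℕ) :
    (∏ i ∈ s, span {a i} ^ n i).ColonStableFrom (α * ∑ i ∈ s, n i) := by
  classical
  induction s using Finset.induction_on with
  | empty => simpa using colonStableFrom_top
  | insert i s hi ih =>
    rw [Finset.prod_insert hi, Finset.sum_insert hi, mul_add]
    exact ColonStableFrom.span_singleton_pow_mul (ha i (s.mem_insert_self i))
      (hα i (s.mem_insert_self i))
      (ih (fun j hj => ha j (Finset.mem_insert_of_mem hj))
        (fun j hj => hα j (Finset.mem_insert_of_mem hj))) (n i)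

end Ideal

/-- If `I_i = (a_i)` are principal ideals generated by nonzerodivisors in a
Noetherian commutative ring, then there is `α ∈ ℕ` such that for every ideal `J` and every
multi-exponent `n`, `I^n : J^(α|n|) = I^n : J^(α|n|+1)`. -/
theorem exists_uniform_colon_stabilization {R : Type*} [CommRing R] [IsNoetherianRing R]
    (r : ℕ) (a : Fin r → R) (ha : ∀ i, a i ∈ nonZeroDivisors R) :
    ∃ α : ℕ, ∀ (J : Ideal R) (n : Fin r → ℕ),
      (∏ i, (Ideal.span {a i}) ^ n i).colon ((J ^ (α * ∑ i, n i) : Ideal R) : Set R) =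
        (∏ i, (Ideal.span {a i}) ^ n i).colon ((J ^ (α * ∑ i, n i + 1) : Ideal R) : Set R) := by
  choose β hβ using fun i => (Ideal.span {a i}).exists_colonStableFrom
  refine ⟨Finset.univ.sup β, fun J n => ?_⟩
  exact Ideal.colonStableFrom_prod_span_singleton_pow Finset.univ (fun i _ => ha i)
    (fun i _ => (hβ i).mono (Finset.le_sup (Finset.mem_univ i))) n J _ le_rfl
end

section
/- Let R = K[X,Y,Z] be a polynomial ring over a field K, let I = (XY, YZ, XZ), and let m = (X,Y,Z). Then (I : m^∞) = I but I^2 : m^∞ ⊋ I^2; in particular XYZ ∈ (I^2 : m^∞) \ I^2, so the saturated Rees algebra ⊕_n (I^n : m^∞) is not a standard graded R-algebra. -/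
/-!
`I` is the monomial ideal of monomials divisible by two distinct variables. If `f * X k ∈ I` for
every `k`, then each monomial of `f` already involves two variables, so `I : m = I`, and
inductively `I : m ^ n = I`. On the other hand `X k * XYZ` is a product of two generators of `I`
for each `k`, while `I ^ 2 ⊆ m ^ 4` cannot contain the cubic monomial `XYZ`.
-/

open MvPolynomial

namespace Ideal

variable {R : Type*} [CommSemiring R] {I J : Ideal R}

theorem colon_pow_le_of_colon_le (h : I.colon (J : Set R) ≤ I) (n : ℕ) :
    I.colon ((J ^ n : Ideal R) : Set R) ≤ I := by
  induction n with
  | zero => simp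
  | succ n ih =>
    refine fun r hr => ih <| Submodule.mem_colon.2 fun a ha =>
      h <| Submodule.mem_colon.2 fun b hb => ?_
    simpa [mul_assoc] using Submodule.mem_colon.1 hr (a * b) (pow_succ J n ▸ mul_mem_mul ha hb)

theorem iSup_colon_pow_eq_self_of_colon_le (h : I.colon (J : Set R) ≤ I) :
    ⨆ n : ℕ, I.colon ((J ^ n : Ideal R) : Set R) = I :=
  le_antisymm (iSup_le (colon_pow_le_of_colon_le h)) (le_iSup_of_le 0 le_colon)

theorem le_iSup_colon_pow (I J : Ideal R) : I ≤ ⨆ n : ℕ, I.colon ((J ^ n : Ideal R) : Set R) :=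
  le_iSup_of_le 0 le_colon

theorem mem_iSup_colon_pow_of_mem_colon {x : R} (hx : x ∈ I.colon (J : Set R)) :
    x ∈ ⨆ n : ℕ, I.colon ((J ^ n : Ideal R) : Set R) :=
  le_iSup (fun n : ℕ => I.colon ((J ^ n : Ideal R) : Set R)) 1 (by rwa [pow_one])

end Ideal

namespace MvPolynomial

variable {σ R : Type*} [CommSemiring R]

theorem mul_X_mem_ideal_span_monomial_image {f : MvPolynomial σ R} {s : Set (σ →₀ ℕ)} {i : σ} :
    f * X i ∈ Ideal.span ((fun s => monomial s (1 : R)) '' s) ↔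
      ∀ d ∈ f.support, ∃ t ∈ s, t ≤ d + Finsupp.single i 1 := by
  classical
  rw [mem_ideal_span_monomial_image, support_mul_X, Finset.forall_mem_map]
  rfl

end MvPolynomial

section TriangleIdeal

open Finsupp

variable {R : Type*} [CommSemiring R]

abbrev triangleExponents : Set (Fin 3 →₀ ℕ) :=
  {single 0 1 + single 1 1, single 1 1 + single 2 1, single 0 1 + single 2 1}

variable (R) in
noncomputable abbrev triangleIdeal : Ideal (MvPolynomial (Fin 3) R) :=
  Ideal.span {X 0 * X 1, X 1 * X 2, X 0 * X 2}

theorem triangleIdeal_eq_span_monomial_image :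
    triangleIdeal R = Ideal.span ((fun s => monomial s (1 : R)) '' triangleExponents) := by
  simp only [triangleIdeal, Set.image_insert_eq, Set.image_singleton, X, monomial_mul, one_mul]

theorem exists_triangleExponents_le_iff (d : Fin 3 →₀ ℕ) :
    (∃ t ∈ triangleExponents, t ≤ d) ↔
      1 ≤ d 0 ∧ 1 ≤ d 1 ∨ 1 ≤ d 1 ∧ 1 ≤ d 2 ∨ 1 ≤ d 0 ∧ 1 ≤ d 2 := by
  simp only [Set.mem_insert_iff, Set.mem_singleton_iff, exists_eq_or_imp, exists_eq_left,
    Finsupp.le_def, Fin.forall_fin_succ, IsEmpty.forall_iff, Finsupp.add_apply, single_apply]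
  simp

theorem triangleIdeal_colon_le :
    (triangleIdeal R).colon ((Ideal.span {X 0, X 1, X 2} : Ideal (MvPolynomial (Fin 3) R)) :
      Set (MvPolynomial (Fin 3) R)) ≤ triangleIdeal R := by
  intro f hf
  rw [Ideal.colon_span, Submodule.mem_colon] at hf
  have hk (k : Fin 3) := mul_X_mem_ideal_span_monomial_image.1 <|
    triangleIdeal_eq_span_monomial_image (R := R) ▸ hf (X k) (by fin_cases k <;> simp)
  rw [triangleIdeal_eq_span_monomial_image, mem_ideal_span_monomial_image]
  intro d hd
  have h0 := hk 0 d hd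
  have h1 := hk 1 d hd
  have h2 := hk 2 d hd
  simp only [exists_triangleExponents_le_iff, Finsupp.add_apply, single_apply, Fin.reduceEq,
    ↓reduceIte] at h0 h1 h2 ⊢
  omega

theorem X_mul_X_mul_X_mem_triangleIdeal_sq_colon :
    X 0 * X 1 * X 2 ∈ (triangleIdeal R ^ 2).colon
      ((Ideal.span {X 0, X 1, X 2} : Ideal (MvPolynomial (Fin 3) R)) :
        Set (MvPolynomial (Fin 3) R)) := by
  have h01 : X 0 * X 1 ∈ triangleIdeal R := Ideal.subset_span (by simp)
  have h12 : X 1 * X 2 ∈ triangleIdeal R := Ideal.subset_span (by simp)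
  have h02 : X 0 * X 2 ∈ triangleIdeal R := Ideal.subset_span (by simp)
  rw [Ideal.colon_span, Submodule.mem_colon]
  rintro _ (rfl | rfl | rfl) <;> rw [smul_eq_mul, sq]
  · convert Ideal.mul_mem_mul h01 h02 using 1; ring
  · convert Ideal.mul_mem_mul h01 h12 using 1; ring
  · convert Ideal.mul_mem_mul h02 h12 using 1; ring

theorem triangleIdeal_le_idealOfVars_sq : triangleIdeal R ≤ idealOfVars (Fin 3) R ^ 2 := by
  rw [Ideal.span_le]
  rintro _ (rfl | rfl | rfl) <;> exact sq (idealOfVars (Fin 3) R) ▸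
    Ideal.mul_mem_mul (Ideal.subset_span ⟨_, rfl⟩) (Ideal.subset_span ⟨_, rfl⟩)

theorem X_mul_X_mul_X_notMem_triangleIdeal_sq [Nontrivial R] :
    X 0 * X 1 * X 2 ∉ triangleIdeal R ^ 2 := by
  intro h
  have h4 := Ideal.pow_right_mono triangleIdeal_le_idealOfVars_sq 2 h
  rw [← pow_mul, X, X, X, monomial_mul, monomial_mul, one_mul, one_mul,
    monomial_mem_pow_idealOfVars_iff _ _ one_ne_zero] at h4
  simp at h4

end TriangleIdeal

/-- For `R = K[X,Y,Z]`, `I = (XY, YZ, XZ)` and `m = (X,Y,Z)` one has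
`I : m^∞ = I`, while `XYZ ∈ (I^2 : m^∞) \ I^2`, so `I^2 : m^∞ ⊋ I^2`; in particular the
saturated Rees algebra of `I` is not standard graded. -/
theorem squares_example_not_standard {K : Type*} [Field K] :
    let I : Ideal (MvPolynomial (Fin 3) K) := Ideal.span {X 0 * X 1, X 1 * X 2, X 0 * X 2}
    let m : Ideal (MvPolynomial (Fin 3) K) := Ideal.span {X 0, X 1, X 2}
    (⨆ n : ℕ, I.colon ((m ^ n : Ideal (MvPolynomial (Fin 3) K)) : Set (MvPolynomial (Fin 3) K))) = I ∧
      (X 0 * X 1 * X 2 : MvPolynomial (Fin 3) K) ∈ (⨆ n : ℕ, (I ^ 2).colon ((m ^ n : Ideal (MvPolynomial (Fin 3) K)) : Set (MvPolynomial (Fin 3) K))) ∧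
      (X 0 * X 1 * X 2 : MvPolynomial (Fin 3) K) ∉ I ^ 2 ∧
      I ^ 2 < ⨆ n : ℕ, (I ^ 2).colon ((m ^ n : Ideal (MvPolynomial (Fin 3) K)) : Set (MvPolynomial (Fin 3) K)) := by
  intro I m
  have hmem : X 0 * X 1 * X 2 ∈ ⨆ n : ℕ, (I ^ 2).colon ((m ^ n : Ideal _) : Set _) :=
    Ideal.mem_iSup_colon_pow_of_mem_colon X_mul_X_mul_X_mem_triangleIdeal_sq_colon
  refine ⟨Ideal.iSup_colon_pow_eq_self_of_colon_le triangleIdeal_colon_le, hmem,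
    X_mul_X_mul_X_notMem_triangleIdeal_sq, ?_⟩
  exact SetLike.lt_iff_le_and_exists.2
    ⟨Ideal.le_iSup_colon_pow _ _, _, hmem, X_mul_X_mul_X_notMem_triangleIdeal_sq⟩
end

section
/- Let R be a commutative Noetherian local ring with maximal ideal m, let I_1,…,I_r be ideals, and let G = ⊕_{n∈ℕ^r} I^n/(I_1 · I^n) be the associated multigraded ring with respect to I_1 (graded pieces I_1^{n_1}⋯I_r^{n_r} / I_1^{n_1+1} I_2^{n_2}⋯I_r^{n_r}). Then the m-torsion submodule H^0_m(G) = ⊕_n H^0_m(I^n / I_1 I^n) is a finitely generated G-module, and hence there exists c > 0 such that m^c annihilates H^0_m(I_1^{n_1}⋯I_r^{n_r} / I_1^{n_1+1} I_2^{n_2}⋯I_r^{n_r}) for all n ∈ ℕ^r. -/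
/-!
The multigraded ring `G` is the quotient of the multi-Rees algebra
`A = R[I₁t₁, …, I_rt_r] ⊆ R[t₁, …, t_r]` by the ideal `K = ⊕ₙ I₁Iⁿtⁿ`. Since `A` is generated by
the finitely many degree-one elements `aᵢtᵢ`, it is Noetherian. The class of `z ∈ Iⁿ` is killed
by `𝔪ᵏ` in `Iⁿ/I₁Iⁿ` exactly when `𝔪ᵏ · ztⁿ ⊆ K`, so the `𝔪`-torsion of all pieces together is the
saturation `K :_A 𝔪^∞`. The ascending chain `K :_A 𝔪ᵏ` stabilises at some `c`, and then `𝔪ᶜ`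
kills every torsion element at once.
-/

open MvPolynomial

section Saturation

variable {R A : Type*} [CommRing R] [CommRing A] [Algebra R A]

theorem Ideal.mem_colon_image_algebraMap_iff (K : Ideal A) (s : Set R) (g : A) :
    g ∈ K.colon (algebraMap R A '' s) ↔ ∀ y ∈ s, y • g ∈ K := by
  simp [Submodule.mem_colon, Algebra.smul_def, mul_comm]

theorem Ideal.exists_uniform_pow_smul_mem [IsNoetherianRing A] (K : Ideal A) (𝔪 : Ideal R) :
    ∃ c₀, ∀ c ≥ c₀, ∀ g : A, (∃ k, ∀ y ∈ 𝔪 ^ k, y • g ∈ K) → ∀ y ∈ 𝔪 ^ c, y • g ∈ K := by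
  let colonPow : ℕ →o Ideal A :=
    ⟨fun k => K.colon (algebraMap R A '' ↑(𝔪 ^ k)), fun i j h =>
      Submodule.colon_mono le_rfl (Set.image_mono (Ideal.pow_le_pow_right h))⟩
  obtain ⟨c₀, hc₀⟩ := monotone_stabilizes_iff_noetherian.mpr ‹_› colonPow
  refine ⟨c₀, fun c hc g ⟨k, hk⟩ => ?_⟩
  have hg : g ∈ colonPow (max k c) :=
    colonPow.monotone (le_max_left k c) ((K.mem_colon_image_algebraMap_iff _ g).mpr hk)
  rw [← hc₀ _ (le_max_of_le_right hc), hc₀ c hc] at hg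
  exact (K.mem_colon_image_algebraMap_iff _ g).mp hg

end Saturation

section MultiRees

variable {R σ : Type*} [CommRing R] [Fintype σ] (I : σ → Ideal R)

def multiPow (n : σ → ℕ) : Ideal R := ∏ i, I i ^ n i

theorem multiPow_zero : multiPow I 0 = ⊤ := by simp [multiPow]

theorem multiPow_add (u v : σ → ℕ) : multiPow I (u + v) = multiPow I u * multiPow I v := by
  simp only [multiPow, Pi.add_apply, pow_add, Finset.prod_mul_distrib]

theorem multiPow_single (i : σ) : multiPow I (Finsupp.single i 1) = I i := by
  rw [multiPow, Finset.prod_eq_single i (fun j _ hj => by simp [hj]) (by simp)]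
  simp

noncomputable def multiReesAlgebra : Subalgebra R (MvPolynomial σ R) where
  carrier := {f | ∀ n : σ →₀ ℕ, coeff n f ∈ multiPow I n}
  mul_mem' {f g} hf hg n := by
    classical
    rw [coeff_mul]
    refine Ideal.sum_mem _ fun ⟨u, v⟩ huv => ?_
    rw [← Finset.HasAntidiagonal.mem_antidiagonal.mp huv, Finsupp.coe_add, multiPow_add]
    exact Ideal.mul_mem_mul (hf u) (hg v)
  one_mem' n := by
    classical
    rw [coeff_one]
    split_ifs with h
    · rw [← h, Finsupp.coe_zero, multiPow_zero]
      exact Submodule.mem_top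
    · exact zero_mem _
  add_mem' hf hg n := by
    rw [coeff_add]
    exact add_mem (hf n) (hg n)
  zero_mem' _ := zero_mem _
  algebraMap_mem' z n := by
    classical
    rw [algebraMap_eq, coeff_C]
    split_ifs with h
    · rw [← h, Finsupp.coe_zero, multiPow_zero]
      exact Submodule.mem_top
    · exact zero_mem _

noncomputable def multiReesDegreeOne : Submodule R (MvPolynomial σ R) :=
  ⨆ i, Submodule.map (monomial (Finsupp.single i 1)) (I i)

theorem monomial_mem_multiReesAlgebra {n : σ →₀ ℕ} {z : R} :
    monomial n z ∈ multiReesAlgebra I ↔ z ∈ multiPow I n := by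
  classical
  refine ⟨fun h => by simpa using h n, fun hz d => ?_⟩
  rw [coeff_monomial]
  split_ifs with h
  · exact h ▸ hz
  · exact zero_mem _

theorem monomial_mem_adjoin_degreeOne {n : σ →₀ ℕ} {z : R} (hz : z ∈ multiPow I n) :
    monomial n z ∈ Algebra.adjoin R (multiReesDegreeOne I : Set (MvPolynomial σ R)) := by
  set B := Algebra.adjoin R (multiReesDegreeOne I : Set (MvPolynomial σ R))
  let P : AddSubmonoid (σ →₀ ℕ) :=
    { carrier := {n | ∀ z ∈ multiPow I n, monomial n z ∈ B}
      zero_mem' := fun z _ => by simpa [monomial_zero'] using B.algebraMap_mem z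
      add_mem' := fun {u v} hu hv z hz => by
        rw [Finsupp.coe_add, multiPow_add] at hz
        refine Submodule.mul_induction_on hz (fun a ha b hb => ?_) (fun x y hx hy => ?_)
        · rw [← monomial_mul]
          exact mul_mem (hu a ha) (hv b hb)
        · rw [map_add]
          exact add_mem hx hy }
  have hsingle (i : σ) : Finsupp.single i 1 ∈ P := fun z hz =>
    Algebra.subset_adjoin <| Submodule.mem_iSup_of_mem i ⟨z, by rwa [multiPow_single] at hz, rfl⟩
  have hn : n ∈ P := by
    rw [← n.sum_single]
    exact sum_mem fun i _ => Finsupp.smul_single_one i (n i) ▸ nsmul_mem (hsingle i) _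
  exact hn z hz

theorem adjoin_degreeOne_eq_multiReesAlgebra :
    Algebra.adjoin R (multiReesDegreeOne I : Set (MvPolynomial σ R)) = multiReesAlgebra I := by
  refine le_antisymm (Algebra.adjoin_le fun f hf => ?_) fun f hf => ?_
  · have hle : multiReesDegreeOne I ≤ Subalgebra.toSubmodule (multiReesAlgebra I) :=
      iSup_le fun i => Submodule.map_le_iff_le_comap.mpr fun z hz =>
        (monomial_mem_multiReesAlgebra I).mpr (by rwa [multiPow_single])
    exact hle hf
  · rw [f.as_sum]
    exact Subalgebra.sum_mem _ fun n _ => monomial_mem_adjoin_degreeOne I (hf n)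

theorem multiReesAlgebra_fg [IsNoetherianRing R] : (multiReesAlgebra I).FG := by
  obtain ⟨s, hs⟩ := Submodule.fg_iSup _ fun i =>
    (IsNoetherian.noetherian (I i)).map (monomial (Finsupp.single i 1))
  rw [← adjoin_degreeOne_eq_multiReesAlgebra, multiReesDegreeOne, ← hs, Algebra.adjoin_span]
  exact ⟨s, rfl⟩

instance [IsNoetherianRing R] : IsNoetherianRing (multiReesAlgebra I) :=
  have : Algebra.FiniteType R (multiReesAlgebra I) :=
    ⟨(Subalgebra.fg_top _).mpr (multiReesAlgebra_fg I)⟩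
  Algebra.FiniteType.isNoetherianRing R _

def multiReesIdeal (𝔞 : Ideal R) : Ideal (multiReesAlgebra I) where
  carrier := {f | ∀ n : σ →₀ ℕ, coeff n (f : MvPolynomial σ R) ∈ 𝔞 * multiPow I n}
  add_mem' hf hg n := by
    rw [Subalgebra.coe_add, coeff_add]
    exact add_mem (hf n) (hg n)
  zero_mem' _ := by simp
  smul_mem' g f hf n := by
    classical
    rw [smul_eq_mul, Subalgebra.coe_mul, coeff_mul]
    refine Ideal.sum_mem _ fun ⟨u, v⟩ huv => ?_
    have hmul : multiPow I u * (𝔞 * multiPow I v) = 𝔞 * multiPow I ⇑(u + v) := by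
      rw [Finsupp.coe_add, multiPow_add, mul_left_comm]
    rw [← Finset.HasAntidiagonal.mem_antidiagonal.mp huv, ← hmul]
    exact Ideal.mul_mem_mul (g.2 u) (hf v)

theorem smul_monomial_mem_multiReesIdeal_iff (𝔞 : Ideal R) {n : σ →₀ ℕ} {z : R}
    (hz : monomial n z ∈ multiReesAlgebra I) (y : R) :
    y • (⟨monomial n z, hz⟩ : multiReesAlgebra I) ∈ multiReesIdeal I 𝔞 ↔
      y * z ∈ 𝔞 * multiPow I n := by
  classical
  change (∀ d : σ →₀ ℕ, coeff d (y • monomial n z) ∈ 𝔞 * multiPow I d) ↔ _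
  simp_rw [smul_monomial, coeff_monomial, smul_eq_mul]
  refine ⟨fun h => by simpa using h n, fun h d => ?_⟩
  split_ifs with hd
  · exact hd ▸ h
  · exact zero_mem _

end MultiRees

/-- Over a Noetherian local ring `(R, m)` with ideals `I_1,…,I_r`, there is a
`c > 0` such that `m^c` annihilates the `m`-torsion of each multigraded piece
`I_1^{n_1}⋯I_r^{n_r} / (I_1^{n_1+1} I_2^{n_2}⋯I_r^{n_r})` of the associated multigraded ring,
uniformly in `n ∈ ℕ^r`. -/
theorem exists_uniform_annihilator_of_torsion {R : Type*} [CommRing R] [IsNoetherianRing R]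
    [IsLocalRing R] (r : ℕ) (hr : 0 < r) (I : Fin r → Ideal R) :
    ∃ c : ℕ, 0 < c ∧ ∀ n : Fin r → ℕ,
      ∀ x ∈ Submodule.map
          (Submodule.mkQ ((I ⟨0, hr⟩ * ∏ i, (I i) ^ n i : Ideal R) : Submodule R R))
          ((∏ i, (I i) ^ n i : Ideal R) : Submodule R R),
        (∃ k : ℕ, ∀ y ∈ ((IsLocalRing.maximalIdeal R) ^ k : Ideal R), y • x = 0) →
        ∀ y ∈ ((IsLocalRing.maximalIdeal R) ^ c : Ideal R), y • x = 0 := by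
  obtain ⟨c₀, hc₀⟩ :=
    (multiReesIdeal I (I ⟨0, hr⟩)).exists_uniform_pow_smul_mem (IsLocalRing.maximalIdeal R)
  refine ⟨c₀ + 1, c₀.succ_pos, fun n x hx => ?_⟩
  obtain ⟨z, hz, rfl⟩ := hx
  set d : Fin r →₀ ℕ := Finsupp.equivFunOnFinite.symm n
  have hd : multiPow I d = ∏ i, I i ^ n i := by
    rw [Finsupp.coe_equivFunOnFinite_symm, multiPow]
  have hzA : monomial d z ∈ multiReesAlgebra I :=
    (monomial_mem_multiReesAlgebra I).mpr (hd ▸ hz)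
  have htransfer (y : R) :
      y • Submodule.mkQ ((I ⟨0, hr⟩ * ∏ i, I i ^ n i : Ideal R) : Submodule R R) z = 0 ↔
      y • (⟨monomial d z, hzA⟩ : multiReesAlgebra I) ∈ multiReesIdeal I (I ⟨0, hr⟩) := by
    rw [smul_monomial_mem_multiReesIdeal_iff, hd, Submodule.mkQ_apply,
      ← Submodule.Quotient.mk_smul, Submodule.Quotient.mk_eq_zero, smul_eq_mul]
  simp only [htransfer]
  exact hc₀ (c₀ + 1) c₀.le_succ _
end
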